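/- arXiv:2210.07133 — 3 statements merged into one kernel-verified Lean document; each statement's English description precedes it below -/
import Mathlib

section
/- Let q be a prime power, let μ = [μ_1 ≥ … ≥ μ_r] be a partition and ν = [ν_1 ≥ … ≥ ν_r] a weakly decreasing sequence of nonnegative integers. Set ν′ = [ν_1, …, ν_{r−1}, ν_r − 1]. Then V(μ,ν) = V(μ′,ν) + V(μ′,ν′) − q^{μ_r−1}·V(μ″,ν′) + (q^{μ_r−1} − 1)·V(μ‴,ν′), where any summand whose partition argument or sequence argument has a negative entry is omitted (treated as 0). -/
open scoped Classical

/-- The q-binomial coefficient `binom(m,k)_q = ∏_{i=1}^{k} (q^{m−k+i} − 1)/(q^i − 1)`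
for `0 ≤ k ≤ m`, and `0` otherwise. -/
noncomputable def qbinom (q : ℚ) (m k : ℤ) : ℚ :=
  if 0 ≤ k ∧ k ≤ m then
    ∏ i ∈ Finset.Icc 1 k.toNat, (q ^ (m - k + (i : ℤ)).toNat - 1) / (q ^ i - 1)
  else 0

/-- `V(μ,ν) = ∏_{j=1}^{r} binom(μ_j − ν_{j+1}, ν_j − ν_{j+1})_q · q^{ν_{j+1}(μ_j − ν_j)}`,
defined to be `0` if some entry `μ_j` or `ν_j` (for `1 ≤ j ≤ r`) is negative. -/
noncomputable def Vq (q : ℚ) (r : ℕ) (μ ν : ℕ → ℤ) : ℚ :=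
  if ∀ j ∈ Finset.Icc 1 r, 0 ≤ μ j ∧ 0 ≤ ν j then
    ∏ j ∈ Finset.Icc 1 r,
      qbinom q (μ j - ν (j + 1)) (ν j - ν (j + 1)) * q ^ (ν (j + 1) * (μ j - ν j))
  else 0

/-!
Splitting off the last factor, `V(μ,ν) = V_{r-1}(μ,ν) · binom(μ_r, ν_r)_q`, where `V_{r-1}` is the
product of the first `r - 1` factors; of these only the factor `j = r - 1` sees `ν_r` and `μ_{r-1}`.
Pascal's rule `binom(m,n) = binom(m-1,n) + q^{m-n} binom(m-1,n-1)`, together with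
`binom(m-1,n-1) + (q^{m-1} - 1) binom(m-2,n-1) = q^{m-n} binom(m-1,n-1)`, reduces the recursion to
`V_{r-1}(μ,ν) = V_{r-1}(μ,ν′) - q^{ν_r - 1} V_{r-1}(μ″,ν′)`, which is Pascal's rule once more, applied
to the factor `j = r - 1`. Since `binom(m,k)_q` vanishes outside `0 ≤ k ≤ m`, the convention that `V`
vanishes at negative entries needs no separate treatment (`ν_r = 0` or `μ_r = 1`).
-/

open Finset Function

section

variable {q : ℚ}

lemma qbinom_eq_zero {m k : ℤ} (h : k < 0 ∨ m < k) : qbinom q m k = 0 :=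
  if_neg (by omega)

lemma qbinom_zero_right {m : ℤ} (hm : 0 ≤ m) : qbinom q m 0 = 1 := by
  simp [qbinom, hm]

lemma qbinom_natCast {M K : ℕ} (h : K ≤ M) :
    qbinom q M K = ∏ i ∈ Icc 1 K, (q ^ (M - K + i) - 1) / (q ^ i - 1) := by
  rw [qbinom, if_pos (by omega), Int.toNat_natCast]
  refine prod_congr rfl fun i _ => ?_
  congr 3
  omega

lemma pow_sub_one_ne_zero_of_not_isOfFinOrder (hq : ¬IsOfFinOrder q) {n : ℕ} (hn : n ≠ 0) :
    q ^ n - 1 ≠ 0 :=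
  sub_ne_zero.2 fun h => hq (isOfFinOrder_iff_pow_eq_one.2 ⟨n, Nat.pos_of_ne_zero hn, h⟩)

lemma zpow_sub_one_ne_zero_of_not_isOfFinOrder (hq : ¬IsOfFinOrder q) {n : ℤ} (hn : 0 < n) :
    q ^ n - 1 ≠ 0 := by
  lift n to ℕ using hn.le
  exact_mod_cast pow_sub_one_ne_zero_of_not_isOfFinOrder hq (by omega)

lemma qbinom_succ_succ_mul (hq : ¬IsOfFinOrder q) (m k : ℤ) :
    qbinom q (m + 1) (k + 1) * (q ^ (k + 1) - 1) = qbinom q m k * (q ^ (m + 1) - 1) := by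
  rcases lt_trichotomy k (-1) with hk | rfl | hk
  · rw [qbinom_eq_zero (by omega), qbinom_eq_zero (by omega), zero_mul, zero_mul]
  · rw [qbinom_eq_zero (k := -1) (by omega)]
    simp
  by_cases hkm : k ≤ m
  swap
  · rw [qbinom_eq_zero (by omega), qbinom_eq_zero (by omega), zero_mul, zero_mul]
  lift k to ℕ using (by omega)
  lift m to ℕ using (by omega)
  have hsucc : ∀ n : ℕ, q ^ ((n : ℤ) + 1) = q ^ (n + 1) := fun n => by
    rw [← zpow_natCast]; push_cast; rfl
  rw [hsucc, hsucc, show ((m : ℤ) + 1) = ((m + 1 : ℕ) : ℤ) by push_cast; rfl,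
    show ((k : ℤ) + 1) = ((k + 1 : ℕ) : ℤ) by push_cast; rfl, qbinom_natCast (by omega),
    qbinom_natCast (by omega), prod_Icc_succ_top (by omega), mul_assoc,
    div_mul_cancel₀ _ (pow_sub_one_ne_zero_of_not_isOfFinOrder hq (by omega)),
    show m + 1 - (k + 1) + (k + 1) = m + 1 by omega]
  congr 2 with i
  congr 3
  omega

lemma qbinom_succ_left_mul (hq : ¬IsOfFinOrder q) (m k : ℤ) :
    qbinom q (m + 1) k * (q ^ (m + 1 - k) - 1) = qbinom q m k * (q ^ (m + 1) - 1) := by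
  rcases lt_or_ge k 0 with hk | hk
  · rw [qbinom_eq_zero (by omega), qbinom_eq_zero (by omega), zero_mul, zero_mul]
  induction k, hk using Int.leInduction generalizing m with
  | base =>
    rcases lt_trichotomy m (-1) with hm | rfl | hm
    · rw [qbinom_eq_zero (by omega), qbinom_eq_zero (by omega), zero_mul, zero_mul]
    · simp
    · rw [qbinom_zero_right (by omega), qbinom_zero_right (by omega), sub_zero]
  | succ k hk ih =>
    have hprev := ih (m - 1)
    have hstep := qbinom_succ_succ_mul hq (m - 1) k
    rw [sub_add_cancel] at hprev hstep
    refine mul_right_cancel₀ (zpow_sub_one_ne_zero_of_not_isOfFinOrder hq (n := k + 1) (by omega)) ?_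
    rw [show m + 1 - (k + 1) = m - k by ring]
    linear_combination (q ^ (m - k) - 1) * qbinom_succ_succ_mul hq m k
      + (q ^ (m + 1) - 1) * hprev - (q ^ (m + 1) - 1) * hstep

/-- Pascal's rule; it fails only for `m = k = -1`. -/
lemma qbinom_succ_succ (hq : ¬IsOfFinOrder q) (hq₀ : q ≠ 0) {m k : ℤ} (h : 0 ≤ m ∨ 0 ≤ k) :
    qbinom q (m + 1) (k + 1) = q ^ (m - k) * qbinom q m k + qbinom q m (k + 1) := by
  rcases lt_or_ge k 0 with hk | hk
  · rcases (show k = -1 ∨ k < -1 by omega) with rfl | hk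
    · rw [neg_add_cancel, qbinom_eq_zero (k := -1) (by omega), qbinom_zero_right (by omega),
        qbinom_zero_right (by omega), mul_zero, zero_add]
    · rw [qbinom_eq_zero (m := m + 1) (by omega), qbinom_eq_zero (m := m) (k := k) (by omega),
        qbinom_eq_zero (m := m) (by omega), mul_zero, add_zero]
  have hpow : q ^ (m - k) * q ^ (k + 1) = q ^ (m + 1) := by
    rw [← zpow_add₀ hq₀]; ring_nf
  have hleft := qbinom_succ_left_mul hq (m - 1) k
  have hright := qbinom_succ_succ_mul hq (m - 1) k
  rw [sub_add_cancel] at hleft hright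
  refine mul_right_cancel₀ (zpow_sub_one_ne_zero_of_not_isOfFinOrder hq (n := k + 1) (by omega)) ?_
  linear_combination qbinom_succ_succ_mul hq m k - qbinom q m k * hpow + hleft - hright

lemma qbinom_weighted_recursion (hq : ¬IsOfFinOrder q) (hq₀ : q ≠ 0) {m n : ℤ} (hm : 1 ≤ m)
    {g₀ g₁ g₂ : ℚ} (hg : g₀ = g₁ - q ^ (n - 1) * g₂) :
    g₀ * qbinom q m n = g₀ * qbinom q (m - 1) n + g₁ * qbinom q (m - 1) (n - 1)
      - q ^ (m - 1) * (g₂ * qbinom q (m - 1) (n - 1))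
      + (q ^ (m - 1) - 1) * (g₁ * qbinom q (m - 2) (n - 1)) := by
  have hpascal := qbinom_succ_succ hq hq₀ (m := m - 1) (k := n - 1) (Or.inl (by omega))
  rw [sub_add_cancel, sub_add_cancel, show m - 1 - (n - 1) = m - n by ring] at hpascal
  have hleft := qbinom_succ_left_mul hq (m - 2) (n - 1)
  rw [show m - 2 + 1 = m - 1 by ring, show m - 1 - (n - 1) = m - n by ring] at hleft
  have hpow : q ^ (m - n) * q ^ (n - 1) = q ^ (m - 1) := by
    rw [← zpow_add₀ hq₀]; ring_nf
  subst hg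
  linear_combination (g₁ - q ^ (n - 1) * g₂) * hpascal + g₁ * hleft
    - g₂ * qbinom q (m - 1) (n - 1) * hpow

/-- The factor `j` of `V(μ,ν)`, with `a = μ_j`, `b = ν_j`, `c = ν_{j+1}`. -/
noncomputable def vqFactor (q : ℚ) (a b c : ℤ) : ℚ :=
  qbinom q (a - c) (b - c) * q ^ (c * (a - b))

lemma vqFactor_sub_one (hq : ¬IsOfFinOrder q) (hq₀ : q ≠ 0) {a b n : ℤ} (hnb : n ≤ b) :
    vqFactor q a b n = vqFactor q a b (n - 1) - q ^ (n - 1) * vqFactor q (a - 1) b (n - 1) := by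
  have hpascal := qbinom_succ_succ hq hq₀ (m := a - n) (k := b - n) (Or.inr (by omega))
  rw [show a - n + 1 = a - (n - 1) by ring, show b - n + 1 = b - (n - 1) by ring,
    show a - n - (b - n) = a - b by ring] at hpascal
  have hpow₁ : q ^ (n * (a - b)) = q ^ (a - b) * q ^ ((n - 1) * (a - b)) := by
    rw [← zpow_add₀ hq₀]; ring_nf
  have hpow₂ : q ^ (n - 1) * q ^ ((n - 1) * (a - 1 - b)) = q ^ ((n - 1) * (a - b)) := by
    rw [← zpow_add₀ hq₀]; ring_nf
  unfold vqFactor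
  rw [show a - 1 - (n - 1) = a - n by ring]
  linear_combination (-q ^ ((n - 1) * (a - b))) * hpascal
    + qbinom q (a - n) (b - n) * hpow₁ + qbinom q (a - n) (b - (n - 1)) * hpow₂

lemma Vq_zero (μ ν : ℕ → ℤ) : Vq q 0 μ ν = 1 := by
  simp [Vq]

lemma Vq_succ {s : ℕ} {μ ν : ℕ → ℤ} (h : 0 ≤ μ (s + 1) ∧ 0 ≤ ν (s + 1)) :
    Vq q (s + 1) μ ν = Vq q s μ ν * vqFactor q (μ (s + 1)) (ν (s + 1)) (ν (s + 1 + 1)) := by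
  unfold Vq
  by_cases hs : ∀ j ∈ Icc 1 s, 0 ≤ μ j ∧ 0 ≤ ν j
  · rw [if_pos hs, if_pos, prod_Icc_succ_top (by omega)]
    · rfl
    intro j hj
    rcases (mem_Icc.1 hj).2.eq_or_lt with rfl | hlt
    · exact h
    · exact hs j (mem_Icc.2 ⟨(mem_Icc.1 hj).1, by omega⟩)
  · rw [if_neg hs, if_neg, zero_mul]
    exact fun h' => hs fun j hj => h' j (Icc_subset_Icc_right (by omega) hj)

lemma Vq_succ_of_eq_zero {s : ℕ} {μ ν : ℕ → ℤ} (hν : ν (s + 1 + 1) = 0) :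
    Vq q (s + 1) μ ν = Vq q s μ ν * qbinom q (μ (s + 1)) (ν (s + 1)) := by
  by_cases h : 0 ≤ μ (s + 1) ∧ 0 ≤ ν (s + 1)
  · simp [Vq_succ h, vqFactor, hν]
  · rw [qbinom_eq_zero (by omega), mul_zero, Vq, if_neg]
    exact fun h' => h (h' (s + 1) (by simp))

lemma Vq_congr {s : ℕ} {μ μ' ν ν' : ℕ → ℤ} (hμ : ∀ j ∈ Icc 1 s, μ j = μ' j)
    (hν : ∀ j ∈ Icc 1 (s + 1), ν j = ν' j) : Vq q s μ ν = Vq q s μ' ν' := by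
  have hν' : ∀ j ∈ Icc 1 s, ν j = ν' j := fun j hj => hν j (Icc_subset_Icc_right (by omega) hj)
  unfold Vq
  rw [prod_congr rfl fun j hj => by
    rw [hμ j hj, hν' j hj, hν (j + 1) (mem_Icc.2 ⟨by omega, by have := (mem_Icc.1 hj).2; omega⟩)]]
  congr 1
  exact propext (forall₂_congr fun j hj => by rw [hμ j hj, hν' j hj])

lemma Vq_update_left {s i : ℕ} (hi : s < i) (μ ν : ℕ → ℤ) (x : ℤ) :
    Vq q s (update μ i x) ν = Vq q s μ ν :=
  Vq_congr (fun j hj => update_of_ne (by have := (mem_Icc.1 hj).2; omega) _ _) fun _ _ => rfl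

lemma Vq_update_right {s i : ℕ} (hi : s + 1 < i) (μ ν : ℕ → ℤ) (x : ℤ) :
    Vq q s μ (update ν i x) = Vq q s μ ν :=
  Vq_congr (fun _ _ => rfl) fun j hj => update_of_ne (by have := (mem_Icc.1 hj).2; omega) _ _

lemma Vq_update_sub_one (hq : ¬IsOfFinOrder q) (hq₀ : q ≠ 0) {t : ℕ} {μ ν : ℕ → ℤ}
    (hμ : 1 ≤ μ (t + 1)) (hν : 0 ≤ ν (t + 1)) (hνν : ν (t + 1 + 1) ≤ ν (t + 1)) :
    Vq q (t + 1) μ ν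
      = Vq q (t + 1) μ (update ν (t + 1 + 1) (ν (t + 1 + 1) - 1))
        - q ^ (ν (t + 1 + 1) - 1)
          * Vq q (t + 1) (update μ (t + 1) (μ (t + 1) - 1))
              (update ν (t + 1 + 1) (ν (t + 1 + 1) - 1)) := by
  have hν' : update ν (t + 1 + 1) (ν (t + 1 + 1) - 1) (t + 1) = ν (t + 1) :=
    update_of_ne (by omega) _ _
  rw [Vq_succ ⟨by omega, hν⟩, Vq_succ ⟨by omega, hν'.ge.trans' hν⟩,
    Vq_succ ⟨by rw [update_self]; omega, hν'.ge.trans' hν⟩, Vq_update_left (by omega),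
    Vq_update_right (by omega), update_self, update_self, hν', vqFactor_sub_one hq hq₀ hνν]
  ring

end

/-- the recursion
`V(μ,ν) = V(μ′,ν) + V(μ′,ν′) − q^{μ_r−1} V(μ″,ν′) + (q^{μ_r−1} − 1) V(μ‴,ν′)`,
where summands whose argument has a negative entry are treated as `0`
(and the `μ″` term is omitted when `r = 1`). -/
theorem Vq_recursion
    (q r : ℕ) (hq : ∃ p k : ℕ, Nat.Prime p ∧ 0 < k ∧ q = p ^ k) (hr : 1 ≤ r)
    (μ ν : ℕ → ℤ)
    (hμmono : ∀ i j : ℕ, 1 ≤ i → i ≤ j → j ≤ r → μ j ≤ μ i) (hμr : 1 ≤ μ r)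
    (hνmono : ∀ i j : ℕ, 1 ≤ i → i ≤ j → j ≤ r → ν j ≤ ν i) (hνr : 0 ≤ ν r)
    (hνtop : ν (r + 1) = 0) :
    Vq (q : ℚ) r μ ν
      = Vq (q : ℚ) r (Function.update μ r (μ r - 1)) ν
        + Vq (q : ℚ) r (Function.update μ r (μ r - 1)) (Function.update ν r (ν r - 1))
        - (q : ℚ) ^ (μ r - 1)
            * (if 2 ≤ r then
                Vq (q : ℚ) r
                  (fun j => if j = r then μ r - 1 else if j = r - 1 then μ (r - 1) - 1 else μ j)
                  (Function.update ν r (ν r - 1))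
              else 0)
        + ((q : ℚ) ^ (μ r - 1) - 1)
            * Vq (q : ℚ) r (Function.update μ r (μ r - 2)) (Function.update ν r (ν r - 1)) := by
  have hq₁ : (1 : ℚ) < q := by
    obtain ⟨p, k, hp, hk, rfl⟩ := hq
    exact_mod_cast Nat.one_lt_pow hk.ne' hp.one_lt
  have hq₀ : (q : ℚ) ≠ 0 := by positivity
  have hqo : ¬IsOfFinOrder (q : ℚ) := fun h => hq₁.ne' (h.eq_one (by positivity))
  obtain ⟨s, rfl⟩ : ∃ s, r = s + 1 := ⟨r - 1, by omega⟩
  have hν' : update ν (s + 1) (ν (s + 1) - 1) (s + 1 + 1) = 0 := by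
    rw [update_of_ne (by omega), hνtop]
  rw [Vq_succ_of_eq_zero hνtop, Vq_succ_of_eq_zero hνtop, Vq_succ_of_eq_zero hν',
    Vq_succ_of_eq_zero hν', Vq_succ_of_eq_zero hν', Vq_update_left s.lt_succ_self,
    Vq_update_left s.lt_succ_self, Vq_update_left s.lt_succ_self, update_self, update_self,
    update_self, if_pos rfl, ← ite_zero_mul]
  refine qbinom_weighted_recursion hqo hq₀ hμr ?_
  rcases s with _ | t
  · simp [Vq_zero]
  have hμ := hμmono (t + 1) (t + 1 + 1) (by omega) (by omega) le_rfl
  have hν := hνmono (t + 1) (t + 1 + 1) (by omega) (by omega) le_rfl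
  rw [if_pos (by omega), Vq_update_sub_one hqo hq₀ (by omega) (by omega) hν]
  congr 2
  refine Vq_congr (fun j hj => ?_) fun _ _ => rfl
  rw [mem_Icc] at hj
  rw [if_neg (by omega), update_apply]
  split_ifs <;> first | rfl | omega
end

section
/- Let a be an n×n matrix over F_q with unique eigenvalue α ∈ F_q, with kernel filtration V_j = ker((a − α·id)^j) and filtration type μ = [μ_1 ≥ … ≥ μ_r]. Let W be a linear subspace of F_q^n with aW ⊆ W, and set ν_j = dim((W ∩ V_j)/(W ∩ V_{j−1})) for 1 ≤ j ≤ r. Then ν_1 ≥ ν_2 ≥ … ≥ ν_r and ν_j ≤ μ_j for every 1 ≤ j ≤ r. -/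
open Matrix Module

lemma key_dim (F M : Type*) [Field F] [AddCommGroup M] [Module F M] [FiniteDimensional F M]
    (f : M →ₗ[F] M) (A B C D : Submodule F M) (hBA : B ≤ A) (hDC : D ≤ C)
    (hfA : ∀ x ∈ A, f x ∈ C) (hker : ∀ x ∈ A, f x ∈ D → x ∈ B) :
    finrank F A - finrank F B ≤ finrank F C - finrank F D := by
  classical
  set ψ : A →ₗ[F] M ⧸ D := (D.mkQ.comp f).comp A.subtype with hψ
  have hkerψ : LinearMap.ker ψ ≤ B.comap A.subtype := by
    intro x hx
    have : f (x : M) ∈ D := by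
      have := hx
      simpa [hψ, LinearMap.mem_ker, Submodule.Quotient.mk_eq_zero] using this
    exact hker x x.2 this
  have h1 : finrank F (LinearMap.ker ψ) ≤ finrank F B := by
    calc finrank F (LinearMap.ker ψ) ≤ finrank F (B.comap A.subtype) :=
          Submodule.finrank_mono hkerψ
      _ = finrank F B := (Submodule.comapSubtypeEquivOfLe hBA).finrank_eq
  have hrange : LinearMap.range ψ ≤ C.map D.mkQ := by
    rintro _ ⟨x, rfl⟩
    exact ⟨f x, hfA x x.2, rfl⟩
  have h2 : finrank F (LinearMap.range ψ) ≤ finrank F (C.map D.mkQ) :=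
    Submodule.finrank_mono hrange
  have h3 : finrank F (C.map D.mkQ) + finrank F D = finrank F C := by
    set φ : C →ₗ[F] M ⧸ D := D.mkQ.comp C.subtype with hφ
    have hrφ : LinearMap.range φ = C.map D.mkQ := by
      rw [hφ, LinearMap.range_comp, Submodule.range_subtype]
    have hkφ : LinearMap.ker φ = D.comap C.subtype := by
      rw [hφ, LinearMap.ker_comp, Submodule.ker_mkQ]
    have hD : finrank F (LinearMap.ker φ) = finrank F D := by
      rw [hkφ]; exact (Submodule.comapSubtypeEquivOfLe hDC).finrank_eq
    have := LinearMap.finrank_range_add_finrank_ker φ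
    rw [hrφ, hD] at this
    exact this
  have h4 : finrank F (LinearMap.range ψ) + finrank F (LinearMap.ker ψ) = finrank F A :=
    LinearMap.finrank_range_add_finrank_ker ψ
  have hBA' : finrank F B ≤ finrank F A := Submodule.finrank_mono hBA
  have hDC' : finrank F D ≤ finrank F C := Submodule.finrank_mono hDC
  omega

/-- `kdim b α j = dim ker((b − α·id)^j)`. -/
noncomputable def kerFilt (F : Type) [Field F] {m : ℕ}
    (b : Matrix (Fin m) (Fin m) F) (α : F) (j : ℕ) : Submodule F (Fin m → F) :=
  LinearMap.ker (Matrix.mulVecLin ((b - α • (1 : Matrix (Fin m) (Fin m) F)) ^ j))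

/-- for `a` with unique eigenvalue `α`, kernel filtration
`V_j = ker((a − α·id)^j)` and filtration type `μ`, and an `a`-invariant subspace `W`,
the numbers `ν_j = dim((W ∩ V_j)/(W ∩ V_{j−1}))` form a weakly decreasing sequence with
`ν_j ≤ μ_j` for all `1 ≤ j ≤ r`. -/
theorem invariant_subspace_filtration_type
    (F : Type) [Field F] [Fintype F] [DecidableEq F]
    (n r : ℕ) (hr : 1 ≤ r)
    (a : Matrix (Fin n) (Fin n) F) (α : F)
    -- `α` is the unique eigenvalue of `a`, with `r` minimal such that `(a − α)^r = 0`
    (htop : (a - α • (1 : Matrix (Fin n) (Fin n) F)) ^ r = 0)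
    (hmin : (a - α • (1 : Matrix (Fin n) (Fin n) F)) ^ (r - 1) ≠ 0)
    (W : Submodule F (Fin n → F)) (hW : W.map a.mulVecLin ≤ W)
    (μ ν : ℕ → ℕ)
    (hμ : ∀ j : ℕ, 1 ≤ j → j ≤ r →
      μ j = finrank F (kerFilt F a α j) - finrank F (kerFilt F a α (j - 1)))
    (hν : ∀ j : ℕ, 1 ≤ j → j ≤ r →
      ν j = finrank F ↥(W ⊓ kerFilt F a α j) - finrank F ↥(W ⊓ kerFilt F a α (j - 1))) :
    (∀ i j : ℕ, 1 ≤ i → i ≤ j → j ≤ r → ν j ≤ ν i)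
      ∧ ∀ j : ℕ, 1 ≤ j → j ≤ r → ν j ≤ μ j := by
  classical
  set b := a - α • (1 : Matrix (Fin n) (Fin n) F) with hb
  set N : (Fin n → F) →ₗ[F] (Fin n → F) := b.mulVecLin with hN
  have hmemV : ∀ (j : ℕ) (x : Fin n → F),
      x ∈ kerFilt F a α j ↔ (b ^ j).mulVec x = 0 := by
    intro j x; simp [kerFilt, hb, Matrix.mulVecLin_apply]
  -- W invariant under N
  have hWN : ∀ x ∈ W, N x ∈ W := by
    intro x hx
    have h1 : a.mulVecLin x ∈ W := hW ⟨x, hx, rfl⟩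
    have : N x = a.mulVecLin x - α • x := by
      simp [hN, hb, Matrix.mulVecLin_apply, Matrix.sub_mulVec, Matrix.smul_mulVec,
        Matrix.one_mulVec]
    rw [this]
    exact W.sub_mem h1 (W.smul_mem α hx)
  -- N maps V_{j+1} into V_j
  have hNV : ∀ (j : ℕ) (x : Fin n → F), (b ^ (j+1)).mulVec x = 0 → (b ^ j).mulVec (N x) = 0 := by
    intro j x hx
    have : (b ^ j).mulVec (b.mulVec x) = (b ^ (j+1)).mulVec x := by
      rw [Matrix.mulVec_mulVec, ← pow_succ]
    simp [hN, Matrix.mulVecLin_apply, this, hx]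
  have hNV' : ∀ (j : ℕ) (x : Fin n → F), (b ^ j).mulVec (N x) = 0 → (b ^ (j+1)).mulVec x = 0 := by
    intro j x hx
    rw [pow_succ, ← Matrix.mulVec_mulVec]
    simpa [hN, Matrix.mulVecLin_apply] using hx
  -- monotonicity of the filtration
  have hVmono : ∀ j : ℕ, kerFilt F a α j ≤ kerFilt F a α (j + 1) := by
    intro j x hx
    rw [hmemV] at hx ⊢
    rw [pow_succ', ← Matrix.mulVec_mulVec, hx, Matrix.mulVec_zero]
  -- ν j ≤ μ j
  have hνμ : ∀ j : ℕ, 1 ≤ j → j ≤ r → ν j ≤ μ j := by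
    intro j hj1 hjr
    obtain ⟨k, rfl⟩ : ∃ k, j = k + 1 := ⟨j - 1, by omega⟩
    rw [hν _ hj1 hjr, hμ _ hj1 hjr]
    exact key_dim F (Fin n → F) LinearMap.id
      (W ⊓ kerFilt F a α (k+1)) (W ⊓ kerFilt F a α k)
      (kerFilt F a α (k+1)) (kerFilt F a α k)
      (inf_le_inf_left W (hVmono k)) (hVmono k)
      (fun x hx => hx.2) (fun x hx hxD => ⟨hx.1, hxD⟩)
  refine ⟨?_, hνμ⟩
  -- consecutive monotonicity
  have hcons : ∀ j : ℕ, 1 ≤ j → j + 1 ≤ r → ν (j + 1) ≤ ν j := by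
    intro j hj1 hjr
    obtain ⟨k, rfl⟩ : ∃ k, j = k + 1 := ⟨j - 1, by omega⟩
    rw [hν _ (by omega) hjr, hν _ hj1 (by omega)]
    refine key_dim F (Fin n → F) N
      (W ⊓ kerFilt F a α (k+2)) (W ⊓ kerFilt F a α (k+1))
      (W ⊓ kerFilt F a α (k+1)) (W ⊓ kerFilt F a α k)
      (inf_le_inf_left W (hVmono (k+1))) (inf_le_inf_left W (hVmono k))
      ?_ ?_
    · intro x hx
      exact ⟨hWN x hx.1, (hmemV _ _).2 (hNV _ _ ((hmemV _ _).1 hx.2))⟩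
    · intro x hx hxD
      exact ⟨hx.1, (hmemV _ _).2 (hNV' _ _ ((hmemV _ _).1 hxD.2))⟩
  intro i j hi hij hjr
  induction j, hij using Nat.le_induction with
  | base => exact le_refl _
  | succ m him ih =>
    exact le_trans (hcons m (by omega) hjr) (ih (by omega))
end

section
/- Let V be a finite-dimensional vector space over a field and let f : V → V be a linear endomorphism whose minimal polynomial equals its characteristic polynomial (i.e. f is a regular/cyclic endomorphism). Then the set of f-invariant linear subspaces of V is finite. -/
open Polynomial LinearMap

/-- Commutation of `aeval` with an intertwining map. -/
lemma aeval_comm_aux {K V M : Type*} [Field K] [AddCommGroup V] [Module K V]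
    [AddCommGroup M] [Module K M] (g : V →ₗ[K] V) (g' : M →ₗ[K] M) (π : V →ₗ[K] M)
    (hc : ∀ v, π (g v) = g' (π v)) (p : K[X]) (v : V) :
    π ((Polynomial.aeval g p) v) = (Polynomial.aeval g' p) (π v) := by
  have hpow : ∀ (n : ℕ) (v : V), π ((g ^ n) v) = (g' ^ n) (π v) := by
    intro n
    induction n with
    | zero => intro v; simp
    | succ n ih => intro v; rw [pow_succ, pow_succ]; simp only [Module.End.mul_apply, hc, ih]
  induction p using Polynomial.induction_on' with
  | add p q hp hq => simp [hp, hq]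
  | monomial n a =>
    simp only [Polynomial.aeval_monomial, Module.End.mul_apply, Module.algebraMap_end_apply,
      map_smul, hpow]

lemma finrank_ker_aeval_le {K V : Type*} [Field K] [AddCommGroup V] [Module K V]
    [FiniteDimensional K V] (f : V →ₗ[K] V) (h : minpoly K f = LinearMap.charpoly f)
    (g : K[X]) (hg : g.Monic) :
    Module.finrank K (LinearMap.ker (Polynomial.aeval f g)) ≤ g.natDegree := by
  set U := LinearMap.ker (Polynomial.aeval f g) with hU
  have hcomm : (Polynomial.aeval f g) * f = f * (Polynomial.aeval f g) := by
    have h1 : Polynomial.aeval f g * f = Polynomial.aeval f (g * X) := by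
      rw [map_mul, Polynomial.aeval_X]
    have h2 : f * Polynomial.aeval f g = Polynomial.aeval f (X * g) := by
      rw [map_mul, Polynomial.aeval_X]
    rw [h1, h2, mul_comm g X]
  have hUinv : U ≤ U.comap f := by
    intro v hv
    simp only [Submodule.mem_comap, hU, LinearMap.mem_ker] at hv ⊢
    have : (Polynomial.aeval f g) (f v) = f ((Polynomial.aeval f g) v) := by
      rw [← Module.End.mul_apply, hcomm, Module.End.mul_apply]
    rw [this, hv, map_zero]
  -- induced endomorphism on the quotient
  set fQ : (V ⧸ U) →ₗ[K] (V ⧸ U) := Submodule.mapQ U U f hUinv with hfQ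
  set mQ : K[X] := minpoly K fQ with hmQ
  have hπ : ∀ v : V, U.mkQ (f v) = fQ (U.mkQ v) := by intro v; simp [hfQ, Submodule.mapQ_apply, Submodule.mkQ_apply]
  -- minpoly f divides g * mQ
  have hdvd : minpoly K f ∣ g * mQ := by
    apply minpoly.dvd
    rw [map_mul]
    ext v
    have h1 : U.mkQ ((Polynomial.aeval f mQ) v) = (Polynomial.aeval fQ mQ) (U.mkQ v) :=
      aeval_comm_aux f fQ U.mkQ hπ mQ v
    rw [minpoly.aeval] at h1
    have h2 : (Polynomial.aeval f mQ) v ∈ U := by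
      rw [← Submodule.ker_mkQ U]; exact h1
    simp only [Module.End.mul_apply, LinearMap.zero_apply]
    exact h2
  have hmQne : mQ ≠ 0 := minpoly.ne_zero (LinearMap.isIntegral fQ)
  have hne : g * mQ ≠ 0 := mul_ne_zero hg.ne_zero hmQne
  have hdeg : (minpoly K f).natDegree ≤ g.natDegree + mQ.natDegree := by
    have := Polynomial.natDegree_le_of_dvd hdvd hne
    rwa [Polynomial.natDegree_mul hg.ne_zero hmQne] at this
  -- mQ divides charpoly fQ
  have hmQdeg : mQ.natDegree ≤ Module.finrank K (V ⧸ U) := by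
    have hd : mQ ∣ LinearMap.charpoly fQ := minpoly.dvd _ _ (LinearMap.aeval_self_charpoly fQ)
    have := Polynomial.natDegree_le_of_dvd hd (LinearMap.charpoly_monic fQ).ne_zero
    rwa [LinearMap.charpoly_natDegree] at this
  have hq : Module.finrank K (V ⧸ U) + Module.finrank K U = Module.finrank K V :=
    Submodule.finrank_quotient_add_finrank U
  have hmin : (minpoly K f).natDegree = Module.finrank K V := by
    rw [h, LinearMap.charpoly_natDegree]
  omega

/-- if the minimal polynomial of a linear endomorphism `f` of a
finite-dimensional vector space equals its characteristic polynomial (i.e. `f` is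
regular/cyclic), then `f` has only finitely many invariant subspaces. -/
theorem regular_endomorphism_finitely_many_invariant_subspaces
    (K V : Type) [Field K] [AddCommGroup V] [Module K V] [FiniteDimensional K V]
    (f : V →ₗ[K] V) (h : minpoly K f = LinearMap.charpoly f) :
    {W : Submodule K V | W.map f ≤ W}.Finite := by
  classical
  set S := {W : Submodule K V | W.map f ≤ W} with hS
  have hcne : LinearMap.charpoly f ≠ 0 := (LinearMap.charpoly_monic f).ne_zero
  haveI : Fintype { g : K[X] // g.Monic ∧ g ∣ LinearMap.charpoly f } :=
    Polynomial.fintypeSubtypeMonicDvd (LinearMap.charpoly f) hcne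
  -- key: every invariant subspace W equals ker (aeval f (minpoly of restriction))
  have key : ∀ W : Submodule K V, W.map f ≤ W →
      ∃ m : K[X], m.Monic ∧ m ∣ LinearMap.charpoly f ∧
        W = LinearMap.ker (Polynomial.aeval f m) := by
    intro W hW
    have hWinv : ∀ x ∈ W, f x ∈ W := fun x hx =>
      hW (Submodule.mem_map_of_mem hx)
    set fr : W →ₗ[K] W := f.restrict hWinv with hfr
    have hι : ∀ w : W, W.subtype (fr w) = f (W.subtype w) := fun w => rfl
    have hcommι : ∀ (p : K[X]) (w : W),
        W.subtype ((Polynomial.aeval fr p) w) = (Polynomial.aeval f p) (W.subtype w) :=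
      fun p w => aeval_comm_aux fr f W.subtype hι p w
    set m : K[X] := minpoly K fr with hm
    have hint : IsIntegral K fr := LinearMap.isIntegral fr
    refine ⟨m, minpoly.monic hint, ?_, ?_⟩
    · apply minpoly.dvd
      ext w
      have := hcommι (LinearMap.charpoly f) w
      rw [LinearMap.aeval_self_charpoly] at this
      simp only [LinearMap.zero_apply] at this ⊢
      simpa using this
    · have hle : W ≤ LinearMap.ker (Polynomial.aeval f m) := by
        intro x hx
        rw [LinearMap.mem_ker]
        have := hcommι m ⟨x, hx⟩
        rw [minpoly.aeval] at this
        simpa using this.symm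
      have hdegW : m.natDegree ≤ Module.finrank K W := by
        have hd : m ∣ LinearMap.charpoly fr :=
          minpoly.dvd _ _ (LinearMap.aeval_self_charpoly fr)
        have := Polynomial.natDegree_le_of_dvd hd (LinearMap.charpoly_monic fr).ne_zero
        rwa [LinearMap.charpoly_natDegree] at this
      have hker : Module.finrank K (LinearMap.ker (Polynomial.aeval f m)) ≤
          Module.finrank K W :=
        le_trans (finrank_ker_aeval_le f h m (minpoly.monic hint)) hdegW
      exact (Submodule.eq_of_le_of_finrank_le hle hker).symm ▸ rfl
  -- build injective map into monic divisors
  choose! m hm1 hm2 hm3 using key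
  have hinj : Set.InjOn (fun W => m W) S := by
    intro W₁ h₁ W₂ h₂ hEq
    simp only at hEq
    rw [hm3 W₁ h₁, hm3 W₂ h₂, hEq]
  have : S ⊆ (fun W => m W) ⁻¹' {g : K[X] | g.Monic ∧ g ∣ LinearMap.charpoly f} := by
    intro W hWS
    exact ⟨hm1 W hWS, hm2 W hWS⟩
  have hfin : {g : K[X] | g.Monic ∧ g ∣ LinearMap.charpoly f}.Finite := by
    have : {g : K[X] | g.Monic ∧ g ∣ LinearMap.charpoly f} =
        Set.range (fun x : { g : K[X] // g.Monic ∧ g ∣ LinearMap.charpoly f } => (x : K[X])) := by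
      ext g; simp [Set.mem_setOf_eq]
    rw [this]
    exact Set.finite_range _
  exact Set.Finite.of_finite_image (hfin.subset (by
    rintro x ⟨W, hWS, rfl⟩
    exact ⟨hm1 W hWS, hm2 W hWS⟩)) hinj
end
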